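/- Let N ≥ 2 be a natural number and let d be a base-phi expansion of N, with leading index L(N) = max{i : d(i) = 1} and trailing index R(N) = min{i : d(i) = 1}. Then for every n ≥ 0: L(N) = 2n and R(N) = −2n if and only if L_{2n} ≤ N ≤ L_{2n+1}; and L(N) = 2n+1 and R(N) = −(2n+2) if and only if L_{2n+1} + 1 ≤ N ≤ L_{2n+2} − 1. -/

import Mathlib

/-- The golden mean φ = (1+√5)/2. -/
noncomputable def phi : ℝ := (1 + Real.sqrt 5) / 2

/-- `d : ℤ → ℕ` is a base-phi expansion of `N`: finitely supported, digits at most 1,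
no two consecutive digits equal 1, and `∑ d i * φ^i = N`. -/
def IsBasePhi (N : ℕ) (d : ℤ → ℕ) : Prop :=
  {i : ℤ | d i ≠ 0}.Finite ∧ (∀ i, d i ≤ 1) ∧ (∀ i, d i * d (i + 1) = 0) ∧
    ∑' i : ℤ, (d i : ℝ) * phi ^ i = (N : ℝ)

/-- The Lucas numbers: L 0 = 2, L 1 = 1, L (n+2) = L (n+1) + L n. -/
def Lucas : ℕ → ℕ
  | 0 => 2
  | 1 => 1
  | n + 2 => Lucas (n + 1) + Lucas n

noncomputable def psi : ℝ := 1 - phi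

lemma phi_eq_gold : phi = Real.goldenRatio := rfl
lemma psi_eq_goldConj : psi = Real.goldenConj := by
  rw [psi, phi_eq_gold, Real.one_sub_goldenConj]

lemma phi_pos : 0 < phi := phi_eq_gold ▸ Real.goldenRatio_pos
lemma phi_ne : phi ≠ 0 := ne_of_gt phi_pos
lemma one_lt_phi : 1 < phi := phi_eq_gold ▸ Real.one_lt_goldenRatio
lemma psi_ne : psi ≠ 0 := psi_eq_goldConj ▸ Real.goldenConj_ne_zero
lemma phi_sq : phi ^ 2 = phi + 1 := phi_eq_gold ▸ Real.goldenRatio_sq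
lemma psi_sq : psi ^ 2 = psi + 1 := psi_eq_goldConj ▸ Real.goldenConj_sq
lemma psi_eq_neg_inv : psi = -phi⁻¹ := by
  rw [psi_eq_goldConj, phi_eq_gold, Real.inv_goldenRatio]; ring

lemma phi_zpow_pos (m : ℤ) : 0 < phi ^ m := zpow_pos phi_pos m

/-- Recurrence for zpow. -/
lemma phi_rec (m : ℤ) : phi ^ (m + 2) = phi ^ (m + 1) + phi ^ m := by
  have h := phi_sq
  have : phi ^ (m + 2) = phi ^ m * phi ^ 2 := by
    rw [← zpow_natCast phi 2, ← zpow_add₀ phi_ne]; norm_num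
  rw [this, h, mul_add, mul_one, ← zpow_add_one₀ phi_ne]

lemma psi_zpow_even {a : ℤ} (h : Even a) : psi ^ a = phi ^ (-a) := by
  rw [psi_eq_neg_inv, h.neg_zpow, inv_zpow, ← zpow_neg]

lemma psi_zpow_odd {a : ℤ} (h : Odd a) : psi ^ a = -phi ^ (-a) := by
  rw [psi_eq_neg_inv, h.neg_zpow, inv_zpow, ← zpow_neg]

lemma phi_zpow_lt {a b : ℤ} (h : a < b) : phi ^ a < phi ^ b :=
  zpow_lt_zpow_right₀ one_lt_phi h

lemma phi_zpow_lt_iff {a b : ℤ} : phi ^ a < phi ^ b ↔ a < b :=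
  zpow_lt_zpow_iff_right₀ one_lt_phi

lemma Icc_top (a m : ℤ) (h : a ≤ m) :
    Finset.Icc a m = insert m (Finset.Icc a (m-1)) := by
  ext x; simp [Finset.mem_Icc]; omega

lemma Icc_bot (a m : ℤ) (h : a ≤ m) :
    Finset.Icc a m = insert a (Finset.Icc (a+1) m) := by
  ext x; simp [Finset.mem_Icc]; omega

lemma dcast {d : ℤ → ℕ} (h1 : ∀ i, d i ≤ 1) (i : ℤ) : (d i : ℝ) ≤ 1 := by
  exact_mod_cast h1 i

lemma term_le {d : ℤ → ℕ} (h1 : ∀ i, d i ≤ 1) (i : ℤ) :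
    (d i : ℝ) * phi ^ i ≤ phi ^ i := by
  have := dcast h1 i
  nlinarith [phi_zpow_pos i, (Nat.cast_nonneg (d i) : (0:ℝ) ≤ _)]

lemma term_nonneg (d : ℤ → ℕ) (i : ℤ) : (0:ℝ) ≤ (d i : ℝ) * phi ^ i :=
  mul_nonneg (Nat.cast_nonneg _) (le_of_lt (phi_zpow_pos i))

/-- Real-side upper bound for admissible digit sums. -/
lemma sum_upper (d : ℤ → ℕ) (h1 : ∀ i, d i ≤ 1) (h2 : ∀ i, d i * d (i+1) = 0) :
    ∀ k : ℕ, ∀ a m : ℤ, m = a + k →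
      ∑ i ∈ Finset.Icc a m, (d i : ℝ) * phi ^ i ≤ phi ^ (m+1) - phi ^ (a - 1) := by
  intro k
  induction k using Nat.strong_induction_on with
  | _ k IH =>
  match k, IH with
  | 0, _ =>
    intro a m hm
    have hma : m = a := by omega
    subst hma
    rw [Finset.Icc_self, Finset.sum_singleton]
    have h := phi_rec (m - 1)
    rw [show m-1+2 = m+1 by ring, show m-1+1 = m by ring] at h
    have := term_le h1 m
    linarith
  | 1, _ =>
    intro a m hm
    have hma : m = a + 1 := by omega
    subst hma
    rw [Icc_top _ _ (by omega), Finset.sum_insert (by simp)]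
    rw [show a+1-1 = a by ring, Finset.Icc_self, Finset.sum_singleton]
    have hadj := h2 a
    have h := phi_rec a
    have h' := phi_rec (a-1)
    rw [show a-1+2 = a+1 by ring, show a-1+1 = a by ring] at h'
    have hp := phi_zpow_pos a
    have hp1 := phi_zpow_pos (a+1)
    have hp2 := phi_zpow_pos (a-1)
    have hlt : phi ^ (a-1) < phi ^ a := phi_zpow_lt (by omega)
    rcases Nat.mul_eq_zero.1 hadj with hz | hz
    · have := term_le h1 (a+1)
      rw [hz, show a+1+1 = a+2 by ring]; push_cast; linarith
    · have := term_le h1 a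
      rw [hz, show a+1+1 = a+2 by ring]; push_cast; linarith
  | (k+2), IH =>
    intro a m hm
    have hm' : m = a + k + 2 := by push_cast at hm; omega
    subst hm'
    rw [Icc_top _ _ (by omega), Finset.sum_insert (by simp only [Finset.mem_Icc]; omega)]
    have hadj := h2 (a+k+1)
    rw [show (a+(k:ℤ)+1)+1 = a+k+2 by ring] at hadj
    have hrec := phi_rec (a+k+1)
    rw [show a+(k:ℤ)+1+2 = a+k+2+1 by ring, show a+(k:ℤ)+1+1 = a+k+2 by ring] at hrec
    rcases Nat.mul_eq_zero.1 hadj with hz | hz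
    · -- hz : d (a+k+1) = 0 : peel one more, keep d (a+k+2) ≤ 1
      rw [show a+(k:ℤ)+2-1 = a+k+1 by ring, Icc_top _ _ (by omega),
        Finset.sum_insert (by simp only [Finset.mem_Icc]; omega)]
      have IHk := IH k (by omega) a (a+k+1-1) (by push_cast; ring)
      rw [show a+(k:ℤ)+1-1+1 = a+k+1 by ring] at IHk
      have := term_le h1 (a+k+2)
      rw [hz]
      push_cast
      have hp := phi_zpow_pos (a+k+1)
      linarith
    · -- hz : d (a+k+2) = 0
      have IHk1 := IH (k+1) (by omega) a (a+k+2-1) (by push_cast; ring)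
      rw [show a+(k:ℤ)+2-1+1 = a+k+2 by ring] at IHk1
      rw [hz, show a+(k:ℤ)+2-1 = a+k+1 by ring]
      push_cast
      have hp := phi_zpow_pos (a+k+2)
      have hp2 := phi_zpow_pos (a+k+2+1)
      have hp3 := phi_zpow_pos (a+k+1)
      rw [show a+(k:ℤ)+2-1 = a+k+1 by ring] at IHk1
      linarith

/-- Conjugate-side two-sided bounds (no adjacency condition needed). -/
lemma conj_bounds (d : ℤ → ℕ) (h1 : ∀ i, d i ≤ 1) :
    ∀ k : ℕ, ∀ a m : ℤ, m = a + (k:ℤ) - 1 →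
      (Even a → -phi ^ (-a) ≤ ∑ i ∈ Finset.Icc a m, (d i : ℝ) * psi ^ i ∧
        ∑ i ∈ Finset.Icc a m, (d i : ℝ) * psi ^ i ≤ phi ^ (1-a)) ∧
      (Odd a → -phi ^ (1-a) ≤ ∑ i ∈ Finset.Icc a m, (d i : ℝ) * psi ^ i ∧
        ∑ i ∈ Finset.Icc a m, (d i : ℝ) * psi ^ i ≤ phi ^ (-a)) := by
  intro k
  induction k with
  | zero =>
    intro a m hm
    have : Finset.Icc a m = ∅ := Finset.Icc_eq_empty (by omega)
    rw [this, Finset.sum_empty]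
    have p1 := phi_zpow_pos (-a)
    have p2 := phi_zpow_pos (1-a)
    exact ⟨fun _ => ⟨by linarith, by linarith⟩, fun _ => ⟨by linarith, by linarith⟩⟩
  | succ k IH =>
    intro a m hm
    have ham : a ≤ m := by omega
    rw [Icc_bot _ _ ham, Finset.sum_insert (by simp)]
    have IH' := IH (a+1) m (by omega)
    have hd0 : (0:ℝ) ≤ (d a : ℝ) := Nat.cast_nonneg _
    have hd1 : (d a : ℝ) ≤ 1 := dcast h1 a
    have pa := phi_zpow_pos (-a)
    have hrec := phi_rec (-a-1)
    rw [show -a-1+2 = 1-a by ring, show -a-1+1 = -a by ring] at hrec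
    constructor
    · intro hae
      have hao : Odd (a+1) := by
        rcases hae with ⟨t, ht⟩; exact ⟨t, by omega⟩
      obtain ⟨hlo, hhi⟩ := IH'.2 hao
      rw [show (1:ℤ)-(a+1) = -a by ring] at hlo
      rw [show -(a+1) = -a-1 by ring] at hhi
      rw [psi_zpow_even hae]
      constructor
      · nlinarith
      · nlinarith
    · intro hao
      have hae : Even (a+1) := by
        rcases hao with ⟨t, ht⟩; exact ⟨t+1, by omega⟩
      obtain ⟨hlo, hhi⟩ := IH'.1 hae
      rw [show -(a+1) = -a-1 by ring] at hlo
      rw [show (1:ℤ)-(a+1) = -a by ring] at hhi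
      rw [psi_zpow_odd hao]
      constructor
      · nlinarith
      · nlinarith

lemma phi_irrational : Irrational phi := phi_eq_gold ▸ Real.goldenRatio_irrational

lemma phi_mul_self : phi * phi = phi + 1 := by
  have h := phi_sq; rw [pow_two] at h; exact h

lemma psi_mul_self : psi * psi = psi + 1 := by
  have h := psi_sq; rw [pow_two] at h; exact h

lemma exists_ab (i : ℤ) : ∃ a b : ℤ, phi ^ i = a * phi + b ∧ psi ^ i = a * psi + b := by
  induction i using Int.induction_on with
  | zero => exact ⟨0, 1, by norm_num, by norm_num⟩
  | succ n ih =>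
    obtain ⟨a, b, hφ, hψ⟩ := ih
    refine ⟨a + b, a, ?_, ?_⟩
    · have : phi ^ ((n:ℤ)+1) = phi ^ (n:ℤ) * phi := zpow_add_one₀ phi_ne _
      rw [this, hφ]
      push_cast
      linear_combination (a:ℝ) * phi_mul_self
    · have : psi ^ ((n:ℤ)+1) = psi ^ (n:ℤ) * psi := zpow_add_one₀ psi_ne _
      rw [this, hψ]
      push_cast
      linear_combination (a:ℝ) * psi_mul_self
  | pred n ih =>
    obtain ⟨a, b, hφ, hψ⟩ := ih
    refine ⟨b, a - b, ?_, ?_⟩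
    · have h : phi ^ (-(n:ℤ)-1) * phi = phi ^ (-(n:ℤ)) := by
        rw [← zpow_add_one₀ phi_ne]; norm_num
      have hgoal : ((b:ℝ) * phi + (a - b)) * phi = phi ^ (-(n:ℤ)) := by
        rw [hφ]; linear_combination (b:ℝ) * phi_mul_self
      have := mul_right_cancel₀ phi_ne (h.trans hgoal.symm)
      push_cast
      linarith [this]
    · have h : psi ^ (-(n:ℤ)-1) * psi = psi ^ (-(n:ℤ)) := by
        rw [← zpow_add_one₀ psi_ne]; norm_num
      have hgoal : ((b:ℝ) * psi + (a - b)) * psi = psi ^ (-(n:ℤ)) := by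
        rw [hψ]; linear_combination (b:ℝ) * psi_mul_self
      have := mul_right_cancel₀ psi_ne (h.trans hgoal.symm)
      push_cast
      linarith [this]

lemma sum_ab (d : ℤ → ℕ) (s : Finset ℤ) :
    ∃ A B : ℤ, ∑ i ∈ s, (d i : ℝ) * phi ^ i = A * phi + B ∧
      ∑ i ∈ s, (d i : ℝ) * psi ^ i = A * psi + B := by
  induction s using Finset.induction_on with
  | empty => exact ⟨0, 0, by simp, by simp⟩
  | insert _ _ hx =>
    rename_i x s' ih
    obtain ⟨A, B, hφ, hψ⟩ := ih
    obtain ⟨a, b, hφ', hψ'⟩ := exists_ab x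
    refine ⟨(d x) * a + A, (d x) * b + B, ?_, ?_⟩
    · rw [Finset.sum_insert hx, hφ, hφ']; push_cast; ring
    · rw [Finset.sum_insert hx, hψ, hψ']; push_cast; ring

/-- Transfer: if the φ-sum over a finset equals the integer N, so does the ψ-sum. -/
lemma conj_transfer (d : ℤ → ℕ) (s : Finset ℤ) (N : ℕ)
    (h : ∑ i ∈ s, (d i : ℝ) * phi ^ i = N) :
    ∑ i ∈ s, (d i : ℝ) * psi ^ i = N := by
  obtain ⟨A, B, hφ, hψ⟩ := sum_ab d s
  have hA : A = 0 := by
    by_contra hA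
    have hirr : Irrational ((A:ℝ) * phi + B) :=
      (phi_irrational.intCast_mul hA).add_intCast B
    rw [← hφ, h] at hirr
    exact (Nat.not_irrational N) hirr
  have hB : (B:ℝ) = N := by rw [hφ, hA] at h; push_cast at h; linarith
  rw [hψ, hA, hB]; push_cast; ring

lemma Lucas_real : ∀ k : ℕ, (Lucas k : ℝ) = phi ^ k + psi ^ k := by
  intro k
  induction k using Nat.strong_induction_on with
  | _ k IH =>
  match k, IH with
  | 0, _ => norm_num [Lucas]
  | 1, _ => norm_num [Lucas, psi]
  | (k+2), IH =>
    have e1 := IH (k+1) (by omega)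
    have e2 := IH k (by omega)
    show ((Lucas (k+1) + Lucas k : ℕ) : ℝ) = _
    push_cast
    rw [e1, e2]
    have hφ : phi ^ (k+2) = phi ^ (k+1) + phi ^ k := by
      rw [pow_succ, pow_succ]
      linear_combination (phi ^ k) * phi_mul_self
    have hψ : psi ^ (k+2) = psi ^ (k+1) + psi ^ k := by
      rw [pow_succ, pow_succ]
      linear_combination (psi ^ k) * psi_mul_self
    rw [hφ, hψ]; ring

lemma Lucas_pos (k : ℕ) : 0 < Lucas k := by
  induction k using Nat.strong_induction_on with
  | _ k IH =>
  match k, IH with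
  | 0, _ => norm_num [Lucas]
  | 1, _ => norm_num [Lucas]
  | (k+2), IH => have := IH k (by omega); have := IH (k+1) (by omega)
                 show 0 < Lucas (k+1) + Lucas k; omega

lemma lucas_even (k : ℕ) (hk : Even k) : (Lucas k : ℝ) = phi ^ (k:ℤ) + phi ^ (-(k:ℤ)) := by
  rw [Lucas_real k, ← zpow_natCast phi, ← zpow_natCast psi,
    psi_zpow_even (by exact_mod_cast hk)]

lemma lucas_odd (k : ℕ) (hk : Odd k) : (Lucas k : ℝ) = phi ^ (k:ℤ) - phi ^ (-(k:ℤ)) := by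
  rw [Lucas_real k, ← zpow_natCast phi, ← zpow_natCast psi,
    psi_zpow_odd (by exact_mod_cast hk)]
  ring

lemma phi_zpow_le {a b : ℤ} (h : a ≤ b) : phi ^ a ≤ phi ^ b :=
  zpow_le_zpow_right₀ (le_of_lt one_lt_phi) h

lemma interval_unique {a b : ℤ} {x : ℝ} (h1 : phi ^ a < x) (h2 : x < phi ^ (a+1))
    (h3 : phi ^ b < x) (h4 : x < phi ^ (b+1)) : a = b := by
  by_contra h
  rcases lt_or_gt_of_ne h with hlt | hlt
  · have : a + 1 ≤ b := by omega
    have := phi_zpow_le this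
    linarith
  · have : b + 1 ≤ a := by omega
    have := phi_zpow_le this
    linarith

lemma key (N : ℕ) (hN : 2 ≤ N) (d : ℤ → ℕ) (hd : IsBasePhi N d) (l r : ℤ)
    (hL : IsGreatest {i : ℤ | d i = 1} l) (hR : IsLeast {i : ℤ | d i = 1} r) :
    phi ^ l + phi ^ r ≤ (N:ℝ) ∧ (N:ℝ) ≤ phi ^ (l+1) - phi ^ (r-1) ∧
      Even r ∧ -l-1 ≤ r ∧ r ≤ -l := by
  obtain ⟨hfin, h1, h2, hsum⟩ := hd
  have hdl : d l = 1 := hL.1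
  have hdr : d r = 1 := hR.1
  have hrl : r ≤ l := hR.2 hL.1
  have hN2 : (2:ℝ) ≤ (N:ℝ) := by exact_mod_cast hN
  have hsupp : ∀ i, i ∉ Finset.Icc r l → d i = 0 := by
    intro i hi
    by_contra h0
    have hone : d i = 1 := by have := h1 i; omega
    have hle := hL.2 hone
    have hge := hR.2 hone
    simp only [Finset.mem_Icc] at hi
    omega
  have hNsum : ∑ i ∈ Finset.Icc r l, (d i : ℝ) * phi ^ i = (N:ℝ) := by
    rw [← hsum]
    exact (tsum_eq_sum (fun i hi => by rw [hsupp i hi]; simp)).symm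
  have hCsum : ∑ i ∈ Finset.Icc r l, (d i : ℝ) * psi ^ i = (N:ℝ) := conj_transfer d _ N hNsum
  -- l ≠ r
  have hlner : l ≠ r := by
    intro he
    rw [he, Finset.Icc_self, Finset.sum_singleton, hdr] at hNsum hCsum
    push_cast at hNsum hCsum
    rw [one_mul] at hNsum hCsum
    -- N = phi ^ r and N = psi ^ r
    have hr2 : 2 ≤ r := by
      by_contra hcon
      have : r ≤ 1 := by omega
      have h3 := phi_zpow_le this
      rw [zpow_one] at h3
      have := phi_eq_gold ▸ Real.goldenRatio_lt_two
      linarith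
    have hlt : phi ^ (-r) < phi ^ (0:ℤ) := phi_zpow_lt (by omega)
    rw [zpow_zero] at hlt
    rcases Int.even_or_odd r with hpar | hpar
    · rw [psi_zpow_even hpar] at hCsum; linarith
    · rw [psi_zpow_odd hpar] at hCsum
      have := phi_zpow_pos (-r); linarith
  -- l ≠ r + 1
  have hlner1 : l ≠ r + 1 := by
    intro he
    have := h2 r
    rw [← he, hdl, hdr] at this
    omega
  have hgap : r + 2 ≤ l := by omega
  -- real lower bound
  have hlow : phi ^ l + phi ^ r ≤ (N:ℝ) := by
    rw [← hNsum]
    have hsub : ({r, l} : Finset ℤ) ⊆ Finset.Icc r l := by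
      intro x hx
      simp only [Finset.mem_insert, Finset.mem_singleton] at hx
      rcases hx with h | h <;> subst h <;> simp [Finset.mem_Icc] <;> omega
    have hpair : ∑ i ∈ ({r, l} : Finset ℤ), (d i : ℝ) * phi ^ i = phi ^ r + phi ^ l := by
      rw [Finset.sum_pair (by omega : r ≠ l), hdr, hdl]; push_cast; ring
    have := Finset.sum_le_sum_of_subset_of_nonneg hsub
      (fun i _ _ => term_nonneg d i)
    rw [hpair] at this
    linarith
  -- real upper bound
  have hup : (N:ℝ) ≤ phi ^ (l+1) - phi ^ (r-1) := by
    rw [← hNsum]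
    exact sum_upper d h1 h2 (l-r).toNat r l (by omega)
  -- peel conjugate sum
  have hdr1 : d (r+1) = 0 := by
    have h := h2 r
    rw [hdr, one_mul] at h
    exact h
  have hCsum2 : (N:ℝ) = psi ^ r + ∑ i ∈ Finset.Icc (r+2) l, (d i : ℝ) * psi ^ i := by
    rw [← hCsum, Icc_bot r l (by omega), Finset.sum_insert (by simp),
      Icc_bot (r+1) l (by omega), Finset.sum_insert (by simp),
      show r+1+1 = r+2 by ring, hdr, hdr1]
    push_cast; ring
  have hbounds := conj_bounds d h1 (l - r - 1).toNat (r+2) l (by omega)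
  -- parity of r
  have heven : Even r := by
    rcases Int.even_or_odd r with hpar | hpar
    · exact hpar
    exfalso
    have hodd2 : Odd (r+2) := by rcases hpar with ⟨t, ht⟩; exact ⟨t+1, by omega⟩
    obtain ⟨_, hhi⟩ := hbounds.2 hodd2
    rw [psi_zpow_odd hpar] at hCsum2
    rw [show -(r+2) = -r-2 by ring] at hhi
    have hlt : phi ^ (-r-2) < phi ^ (-r) := phi_zpow_lt (by omega)
    have := phi_zpow_pos (-r)
    linarith
  have heven2 : Even (r+2) := by rcases heven with ⟨t, ht⟩; exact ⟨t+1, by omega⟩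
  obtain ⟨hlo', hhi'⟩ := hbounds.1 heven2
  rw [psi_zpow_even heven] at hCsum2
  rw [show -(r+2) = -r-2 by ring] at hlo'
  rw [show (1:ℤ)-(r+2) = -r-1 by ring] at hhi'
  -- conjugate bounds on N
  have hrec1 := phi_rec (-r-2)
  rw [show -r-2+2 = -r by ring, show -r-2+1 = -r-1 by ring] at hrec1
  have hc1 : phi ^ (-r-1) ≤ (N:ℝ) := by linarith
  have hc2 : (N:ℝ) ≤ phi ^ (1-r) := by
    have hrec2 := phi_rec (-r-1)
    rw [show -r-1+2 = 1-r by ring, show -r-1+1 = -r by ring] at hrec2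
    linarith
  -- combine
  have hp1 : phi ^ l < (N:ℝ) := by have := phi_zpow_pos r; linarith
  have hp2 : (N:ℝ) < phi ^ (l+1) := by have := phi_zpow_pos (r-1); linarith
  have hb1 : -l-1 ≤ r := by
    have : phi ^ (-r-1) < phi ^ (l+1) := lt_of_le_of_lt hc1 hp2
    have := phi_zpow_lt_iff.1 this
    omega
  have hb2 : r ≤ -l := by
    have : phi ^ l < phi ^ (1-r) := lt_of_lt_of_le hp1 hc2
    have := phi_zpow_lt_iff.1 this
    omega
  exact ⟨hlow, hup, heven, hb1, hb2⟩

/-- For `N ≥ 2` with base-phi expansion `d`, leading index `Li = max {i | d i = 1}` and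
trailing index `Ri = min {i | d i = 1}`: `Li = 2n ∧ Ri = -2n` iff `N ∈ [L 2n, L (2n+1)]`,
and `Li = 2n+1 ∧ Ri = -(2n+2)` iff `N ∈ [L (2n+1) + 1, L (2n+2) - 1]`. -/
theorem leading_trailing_index (N : ℕ) (hN : 2 ≤ N) (d : ℤ → ℕ) (hd : IsBasePhi N d)
    (Li Ri : ℤ) (hL : IsGreatest {i : ℤ | d i = 1} Li) (hR : IsLeast {i : ℤ | d i = 1} Ri)
    (n : ℕ) :
    ((Li = (2 * n : ℤ) ∧ Ri = -(2 * n : ℤ)) ↔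
      (Lucas (2 * n) ≤ N ∧ N ≤ Lucas (2 * n + 1))) ∧
    ((Li = (2 * n + 1 : ℤ) ∧ Ri = -(2 * n + 2 : ℤ)) ↔
      (Lucas (2 * n + 1) + 1 ≤ N ∧ N ≤ Lucas (2 * n + 2) - 1)) := by
  obtain ⟨hlow, hup, heven, hb1, hb2⟩ := key N hN d hd Li Ri hL hR
  have hp1 : phi ^ Li < (N:ℝ) := by have := phi_zpow_pos Ri; linarith
  have hp2 : (N:ℝ) < phi ^ (Li+1) := by have := phi_zpow_pos (Ri-1); linarith
  have hLe : (Lucas (2*n) : ℝ) = phi ^ ((2*n : ℕ):ℤ) + phi ^ (-((2*n:ℕ):ℤ)) :=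
    lucas_even (2*n) ⟨n, by omega⟩
  have hLo : (Lucas (2*n+1) : ℝ) = phi ^ ((2*n+1 : ℕ):ℤ) + -phi ^ (-((2*n+1:ℕ):ℤ)) := by
    rw [lucas_odd (2*n+1) ⟨n, by omega⟩]; ring
  have hLe2 : (Lucas (2*n+2) : ℝ) = phi ^ ((2*n+2 : ℕ):ℤ) + phi ^ (-((2*n+2:ℕ):ℤ)) :=
    lucas_even (2*n+2) ⟨n+1, by omega⟩
  rw [show (((2*n:ℕ)):ℤ) = (2*n : ℤ) by push_cast; ring] at hLe
  rw [show (((2*n+1:ℕ)):ℤ) = (2*(n:ℤ)+1) by push_cast; ring] at hLo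
  rw [show (((2*n+2:ℕ)):ℤ) = (2*(n:ℤ)+2) by push_cast; ring] at hLe2
  constructor
  · constructor
    · rintro ⟨hl, hr⟩
      subst hl; subst hr
      constructor
      · have : (Lucas (2*n) : ℝ) ≤ (N:ℝ) := by
          rw [hLe, show -(2*(n:ℤ)) = -(2*n:ℤ) by ring]
          linarith
        exact_mod_cast this
      · have : (N:ℝ) ≤ (Lucas (2*n+1) : ℝ) := by
          rw [hLo]
          rw [show -(2*(n:ℤ))-1 = -(2*(n:ℤ)+1) by ring] at hup
          linarith
        exact_mod_cast this
    · rintro ⟨h1, h2⟩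
      have h1' : (Lucas (2*n) : ℝ) ≤ (N:ℝ) := by exact_mod_cast h1
      have h2' : (N:ℝ) ≤ (Lucas (2*n+1) : ℝ) := by exact_mod_cast h2
      rw [hLe] at h1'
      rw [hLo] at h2'
      have hq1 : phi ^ (2*(n:ℤ)) < (N:ℝ) := by
        have := phi_zpow_pos (-(2*(n:ℤ))); linarith
      have hq2 : (N:ℝ) < phi ^ (2*(n:ℤ)+1) := by
        have := phi_zpow_pos (-(2*(n:ℤ)+1)); linarith
      have hLi : Li = 2*n := interval_unique hp1 hp2 hq1 hq2
      refine ⟨hLi, ?_⟩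
      obtain ⟨t, ht⟩ := heven
      omega
  · constructor
    · rintro ⟨hl, hr⟩
      subst hl; subst hr
      constructor
      · have : (Lucas (2*n+1) : ℝ) < (N:ℝ) := by
          rw [hLo]
          have := phi_zpow_pos (-(2*(n:ℤ)+2))
          have := phi_zpow_pos (-(2*(n:ℤ)+1))
          linarith
        have : Lucas (2*n+1) < N := by exact_mod_cast this
        omega
      · have hlt : (N:ℝ) < (Lucas (2*n+2) : ℝ) := by
          rw [hLe2]
          rw [show 2*(n:ℤ)+1+1 = 2*(n:ℤ)+2 by ring,
            show -(2*(n:ℤ)+2)-1 = -(2*(n:ℤ)+3) by ring] at hup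
          have := phi_zpow_pos (-(2*(n:ℤ)+3))
          have := phi_zpow_pos (-(2*(n:ℤ)+2))
          linarith
        have : N < Lucas (2*n+2) := by exact_mod_cast hlt
        omega
    · rintro ⟨h1, h2⟩
      have hLpos := Lucas_pos (2*n+2)
      have h2'' : N ≤ Lucas (2*n+2) - 1 := h2
      have h2n : N + 1 ≤ Lucas (2*n+2) := by omega
      have h1' : (Lucas (2*n+1) : ℝ) + 1 ≤ (N:ℝ) := by exact_mod_cast h1
      have h2' : (N:ℝ) + 1 ≤ (Lucas (2*n+2) : ℝ) := by exact_mod_cast h2n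
      rw [hLo] at h1'
      rw [hLe2] at h2'
      have hone : phi ^ (-(2*(n:ℤ)+1)) < 1 := by
        have := phi_zpow_lt (show -(2*(n:ℤ)+1) < 0 by omega)
        rwa [zpow_zero] at this
      have hone2 : phi ^ (-(2*(n:ℤ)+2)) < 1 := by
        have := phi_zpow_lt (show -(2*(n:ℤ)+2) < 0 by omega)
        rwa [zpow_zero] at this
      have hq1 : phi ^ (2*(n:ℤ)+1) < (N:ℝ) := by linarith
      have hq2 : (N:ℝ) < phi ^ ((2*(n:ℤ)+1)+1) := by
        rw [show 2*(n:ℤ)+1+1 = 2*(n:ℤ)+2 by ring]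
        linarith
      have hLi : Li = 2*n+1 := interval_unique hp1 hp2 hq1 hq2
      refine ⟨hLi, ?_⟩
      obtain ⟨t, ht⟩ := heven
      omega
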